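/- arXiv:2501.11766 — 5 statements merged into one kernel-verified Lean document; each statement's English description precedes it below -/
import Mathlib

section
/- Let k ≥ 1 be an integer and N ≥ 1 a real number. Then for all real numbers s, t ≥ exp^{(k)}(2N) and every integer j with 1 ≤ j ≤ k, one has ln^{(j)}(s·t) ≤ (ln^{(j)} s)·(ln^{(j)} t). -/
/-!
Since `log (a * b) = log a + log b ≤ log a * log b` once `log a, log b ≥ 2`, and `log` is monotone,
the inequality propagates from one level of the iterated logarithm to the next. The hypothesis
`s, t ≥ exp^[k] (2N)` keeps every iterated logarithm of `s`, `t` and `s * t` up to level `k` at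
least `2`.
-/

open Real

lemma Real.le_exp_self (x : ℝ) : x ≤ exp x := by
  linarith [add_one_le_exp x]

lemma Real.le_iterate_exp_self (m : ℕ) (x : ℝ) : x ≤ exp^[m] x :=
  Function.id_le_iterate_of_id_le le_exp_self m x

lemma Real.le_iterate_log_of_iterate_exp_le {x y : ℝ} (m : ℕ) (h : exp^[m] y ≤ x) :
    y ≤ log^[m] x := by
  induction m generalizing y with
  | zero => exact h
  | succ m ih =>
    rw [Function.iterate_succ_apply] at h
    rw [Function.iterate_succ_apply']
    have hexp : exp y ≤ log^[m] x := ih h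
    exact (le_log_iff_exp_le ((exp_pos y).trans_le hexp)).2 hexp

lemma Real.two_le_iterate_log {c x : ℝ} {i k : ℕ} (hc : 2 ≤ c) (hx : exp^[k] c ≤ x)
    (hik : i ≤ k) : 2 ≤ log^[i] x := by
  apply le_iterate_log_of_iterate_exp_le
  calc exp^[i] 2 ≤ exp^[i] (exp^[k - i] c) :=
        exp_monotone.iterate i (hc.trans (le_iterate_exp_self _ c))
    _ = exp^[k] c := by rw [← Function.iterate_add_apply, Nat.add_sub_cancel' hik]
    _ ≤ x := hx

lemma Real.log_le_log_mul_log {a b c : ℝ} (hc : 0 < c) (hcab : c ≤ a * b)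
    (ha : 2 ≤ log a) (hb : 2 ≤ log b) : log c ≤ log a * log b := by
  have ha0 : a ≠ 0 := by rintro rfl; norm_num at ha
  have hb0 : b ≠ 0 := by rintro rfl; norm_num at hb
  calc log c ≤ log (a * b) := log_le_log hc hcab
    _ = log a + log b := log_mul ha0 hb0
    _ ≤ log a * log b := add_le_mul ha hb

lemma Real.iterate_log_mul_le {x y : ℝ} (n : ℕ) (hxy : ∀ i < n, 0 < log^[i] (x * y))
    (hx : ∀ i < n, 2 ≤ log^[i + 1] x) (hy : ∀ i < n, 2 ≤ log^[i + 1] y) :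
    log^[n] (x * y) ≤ log^[n] x * log^[n] y := by
  induction n with
  | zero => exact le_rfl
  | succ n ih =>
    have hx' := hx n n.lt_succ_self
    have hy' := hy n n.lt_succ_self
    simp only [Function.iterate_succ_apply'] at hx' hy' ⊢
    refine log_le_log_mul_log (hxy n n.lt_succ_self) ?_ hx' hy'
    exact ih (fun i hi => hxy i (by omega)) (fun i hi => hx i (by omega))
      (fun i hi => hy i (by omega))

theorem iterated_log_submultiplicative_general
    (k : ℕ) (N : ℝ) (hN : 1 ≤ N)
    (s t : ℝ) (hs : Real.exp^[k] (2 * N) ≤ s) (ht : Real.exp^[k] (2 * N) ≤ t)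
    (j : ℕ) (hjk : j ≤ k) :
    Real.log^[j] (s * t) ≤ Real.log^[j] s * Real.log^[j] t := by
  have hc : (2 : ℝ) ≤ 2 * N := by linarith
  have hs2 : (2 : ℝ) ≤ s := two_le_iterate_log (i := 0) hc hs k.zero_le
  have ht2 : (2 : ℝ) ≤ t := two_le_iterate_log (i := 0) hc ht k.zero_le
  have hst : Real.exp^[k] (2 * N) ≤ s * t :=
    hs.trans (le_mul_of_one_le_right (by linarith) (by linarith))
  exact iterate_log_mul_le j
    (fun i hi => two_pos.trans_le (two_le_iterate_log hc hst (by omega)))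
    (fun i hi => two_le_iterate_log hc hs (by omega))
    (fun i hi => two_le_iterate_log hc ht (by omega))

/-- For an integer `k ≥ 1` and a real `N ≥ 1`, for all reals
`s, t ≥ exp^[k] (2N)` and every integer `j` with `1 ≤ j ≤ k`,
`ln^[j] (s·t) ≤ (ln^[j] s) · (ln^[j] t)`. -/
theorem iterated_log_submultiplicative
    (k : ℕ) (hk : 1 ≤ k) (N : ℝ) (hN : 1 ≤ N)
    (s t : ℝ) (hs : Real.exp^[k] (2 * N) ≤ s) (ht : Real.exp^[k] (2 * N) ≤ t)
    (j : ℕ) (hj1 : 1 ≤ j) (hjk : j ≤ k) :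
    Real.log^[j] (s * t) ≤ Real.log^[j] s * Real.log^[j] t :=
  iterated_log_submultiplicative_general k N hN s t hs ht j hjk
end

section
/- Let k ≥ 1 be an integer and N ≥ 1 a real number, and set E = exp^{(k)}(2N). Define Φ⁰(t) = t·(ln t)²·(ln^{(2)} t)²⋯(ln^{(k−1)} t)²·(ln^{(k)} t)^{2N} for t ≥ E. Then Φ⁰ is submultiplicative on [E,∞): for all s, t ≥ E one has Φ⁰(s·t) ≤ Φ⁰(s)·Φ⁰(t). -/
/-!
Since `N ≥ 1`, every `t ≥ exp^{(k)}(2N)` has `ln^{(i)} t ≥ 2` for all `i ≤ k`, and `a + b ≤ a b`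
for `a, b ≥ 2`. Hence `ln (x y) = ln x + ln y ≤ ln x · ln y` there, and iterating this through the
monotone `ln` shows that each factor `ln^{(i)}` of `Φ⁰` is nonnegative and submultiplicative on
`[E, ∞)`; so is their product.
-/

namespace Real

theorem monotone_iterate_exp_apply (x : ℝ) : Monotone fun n => exp^[n] x :=
  fun _ _ hmn =>
    Function.monotone_iterate_of_id_le (fun y => (by linarith [add_one_le_exp y] : y ≤ exp y)) hmn x

theorem le_iterate_log_of_iterate_exp_le_s1 {n : ℕ} {c t : ℝ} (h : exp^[n] c ≤ t) :
    c ≤ log^[n] t := by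
  induction n generalizing c with
  | zero => exact h
  | succ n ih =>
    rw [Function.iterate_succ_apply']
    rw [Function.iterate_succ_apply] at h
    calc c = log (exp c) := (log_exp c).symm
      _ ≤ log (log^[n] t) := log_le_log (exp_pos c) (ih h)

theorem two_le_iterate_log_s1 {i n : ℕ} {t : ℝ} (hi : i ≤ n) (ht : exp^[n] 2 ≤ t) :
    2 ≤ log^[i] t :=
  le_iterate_log_of_iterate_exp_le_s1 ((monotone_iterate_exp_apply 2 hi).trans ht)

theorem two_le_of_iterate_exp_two_le {n : ℕ} {t : ℝ} (ht : exp^[n] 2 ≤ t) : 2 ≤ t :=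
  two_le_iterate_log_s1 (Nat.zero_le n) ht

theorem log_mul_le_log_mul_log {x y : ℝ} (hx : 2 ≤ log x) (hy : 2 ≤ log y) :
    log (x * y) ≤ log x * log y := by
  have hx0 : x ≠ 0 := by rintro rfl; norm_num at hx
  have hy0 : y ≠ 0 := by rintro rfl; norm_num at hy
  rw [log_mul hx0 hy0]
  nlinarith

theorem iterate_exp_two_le_mul {n : ℕ} {s t : ℝ} (hs : exp^[n] 2 ≤ s) (ht : exp^[n] 2 ≤ t) :
    exp^[n] 2 ≤ s * t :=
  hs.trans (le_mul_of_one_le_right (by linarith [two_le_of_iterate_exp_two_le hs])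
    (by linarith [two_le_of_iterate_exp_two_le ht]))

theorem iterate_log_mul_le_s1 (n : ℕ) {s t : ℝ} (hs : exp^[n] 2 ≤ s) (ht : exp^[n] 2 ≤ t) :
    log^[n] (s * t) ≤ log^[n] s * log^[n] t := by
  induction n with
  | zero => exact le_rfl
  | succ n ih =>
    have hmono : exp^[n] 2 ≤ exp^[n + 1] 2 := monotone_iterate_exp_apply 2 n.le_succ
    have hst := iterate_exp_two_le_mul hs ht
    have hs' := two_le_iterate_log_s1 le_rfl hs
    have ht' := two_le_iterate_log_s1 le_rfl ht
    simp only [Function.iterate_succ_apply'] at hs' ht' ⊢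
    calc log (log^[n] (s * t))
        ≤ log (log^[n] s * log^[n] t) := log_le_log
          (by linarith [two_le_iterate_log_s1 n.le_succ hst]) (ih (hmono.trans hs) (hmono.trans ht))
      _ ≤ log (log^[n] s) * log (log^[n] t) := log_mul_le_log_mul_log hs' ht'

theorem iterate_log_mul_le_of_le {i n : ℕ} {s t : ℝ} (hi : i ≤ n) (hs : exp^[n] 2 ≤ s)
    (ht : exp^[n] 2 ≤ t) : log^[i] (s * t) ≤ log^[i] s * log^[i] t :=
  iterate_log_mul_le_s1 i ((monotone_iterate_exp_apply 2 hi).trans hs)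
    ((monotone_iterate_exp_apply 2 hi).trans ht)

theorem prod_sq_iterate_log_mul_le (n : ℕ) {s t : ℝ} (hs : exp^[n] 2 ≤ s)
    (ht : exp^[n] 2 ≤ t) :
    ∏ i ∈ Finset.Ico 1 n, (log^[i] (s * t)) ^ 2 ≤
      (∏ i ∈ Finset.Ico 1 n, (log^[i] s) ^ 2) * ∏ i ∈ Finset.Ico 1 n, (log^[i] t) ^ 2 := by
  rw [← Finset.prod_mul_distrib]
  gcongr with i hi
  have hin := (Finset.mem_Ico.mp hi).2.le
  rw [← mul_pow]
  exact pow_le_pow_left₀ (by linarith [two_le_iterate_log_s1 hin (iterate_exp_two_le_mul hs ht)])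
    (iterate_log_mul_le_of_le hin hs ht) 2

theorem iterate_log_mul_rpow_le (n : ℕ) {p s t : ℝ} (hp : 0 ≤ p) (hs : exp^[n] 2 ≤ s)
    (ht : exp^[n] 2 ≤ t) :
    (log^[n] (s * t)) ^ p ≤ (log^[n] s) ^ p * (log^[n] t) ^ p := by
  rw [← mul_rpow (by linarith [two_le_iterate_log_s1 le_rfl hs])
    (by linarith [two_le_iterate_log_s1 le_rfl ht])]
  exact rpow_le_rpow (by linarith [two_le_iterate_log_s1 le_rfl (iterate_exp_two_le_mul hs ht)])
    (iterate_log_mul_le_s1 n hs ht) hp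

end Real

open Real

theorem Phi0_submultiplicative_general
    (k : ℕ) (N : ℝ) (hN : 1 ≤ N)
    (Phi0 : ℝ → ℝ)
    (hPhi0 : ∀ t, Real.exp^[k] (2 * N) ≤ t →
      Phi0 t = t * (∏ i ∈ Finset.Ico 1 k, (Real.log^[i] t) ^ 2) *
        (Real.log^[k] t) ^ (2 * N)) :
    ∀ s, Real.exp^[k] (2 * N) ≤ s → ∀ t, Real.exp^[k] (2 * N) ≤ t →
      Phi0 (s * t) ≤ Phi0 s * Phi0 t := by
  intro s hs t ht
  have hE : exp^[k] 2 ≤ exp^[k] (2 * N) := (exp_monotone.iterate k) (by linarith)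
  have hs' := hE.trans hs
  have ht' := hE.trans ht
  have hs2 := two_le_of_iterate_exp_two_le hs'
  have ht2 := two_le_of_iterate_exp_two_le ht'
  have hst : exp^[k] (2 * N) ≤ s * t := ht.trans (le_mul_of_one_le_left (by linarith) (by linarith))
  rw [hPhi0 s hs, hPhi0 t ht, hPhi0 _ hst]
  calc s * t * (∏ i ∈ Finset.Ico 1 k, (log^[i] (s * t)) ^ 2) * (log^[k] (s * t)) ^ (2 * N)
      ≤ s * t * ((∏ i ∈ Finset.Ico 1 k, (log^[i] s) ^ 2) * ∏ i ∈ Finset.Ico 1 k, (log^[i] t) ^ 2) *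
          ((log^[k] s) ^ (2 * N) * (log^[k] t) ^ (2 * N)) := by
        refine mul_le_mul (mul_le_mul_of_nonneg_left (prod_sq_iterate_log_mul_le k hs' ht')
          (by positivity))
          (iterate_log_mul_rpow_le k (by linarith) hs' ht')
          (rpow_nonneg (by linarith [two_le_iterate_log_s1 le_rfl (hE.trans hst)]) _) (by positivity)
    _ = _ := by ring

/-- For `k ≥ 1`, `N ≥ 1`, `E = exp^[k](2N)`, the function
`Φ⁰(t) = t·(ln t)²·(ln^[2] t)²⋯(ln^[k-1] t)²·(ln^[k] t)^(2N)` is submultiplicative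
on `[E, ∞)`: for all `s, t ≥ E`, `Φ⁰(s·t) ≤ Φ⁰(s)·Φ⁰(t)`. -/
theorem Phi0_submultiplicative
    (k : ℕ) (hk : 1 ≤ k) (N : ℝ) (hN : 1 ≤ N)
    (Phi0 : ℝ → ℝ)
    (hPhi0 : ∀ t, Real.exp^[k] (2 * N) ≤ t →
      Phi0 t = t * (∏ i ∈ Finset.Ico 1 k, (Real.log^[i] t) ^ 2) *
        (Real.log^[k] t) ^ (2 * N)) :
    ∀ s, Real.exp^[k] (2 * N) ≤ s → ∀ t, Real.exp^[k] (2 * N) ≤ t →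
      Phi0 (s * t) ≤ Phi0 s * Phi0 t :=
  Phi0_submultiplicative_general k N hN Phi0 hPhi0
end

section
/- Let k ≥ 1 be an integer and N > 1 a real number, set E = exp^{(k)}(2N), and let Φ⁰_{k,N}(t) = t·(ln t)²·(ln^{(2)} t)²⋯(ln^{(k−1)} t)²·(ln^{(k)} t)^{2N} for t ≥ E, extended by Φ⁰_{k,N}(t) = t·(ln E)²·(ln^{(2)} E)²⋯(ln^{(k)} E)^{2N} for 0 ≤ t ≤ E. Let Φ̃⁰ be the Young conjugate of Φ⁰_{k,N}. Then there exists a constant C_{k,N} > 0 such that for all s ≥ Φ⁰_{k,N}(E), the generalized inverse satisfies (Φ̃⁰)^{-1}(s) ≥ C_{k,N}·(ln s)²·(ln^{(2)} s)²⋯(ln^{(k−1)} s)²·(ln^{(k)} s)^{2N}. -/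
/-- The Young function `Φ⁰_{k,N}` from the paper:
`Φ⁰(t) = t·(ln t)²·(ln^[2] t)²⋯(ln^[k-1] t)²·(ln^[k] t)^(2N)` for `t ≥ E = exp^[k](2N)`,
extended linearly (freezing the logarithmic factors at `E`) for `0 ≤ t ≤ E`. -/
noncomputable def Phi0 (k : ℕ) (N : ℝ) (t : ℝ) : ℝ :=
  if Real.exp^[k] (2 * N) ≤ t then
    t * (∏ i ∈ Finset.Ico 1 k, (Real.log^[i] t) ^ 2) * (Real.log^[k] t) ^ (2 * N)
  else
    t * (∏ i ∈ Finset.Ico 1 k, (Real.log^[i] (Real.exp^[k] (2 * N))) ^ 2) *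
      (Real.log^[k] (Real.exp^[k] (2 * N))) ^ (2 * N)

/-- Young conjugate: `Φ̃(s) = sup_{t ≥ 0} (s·t − Φ(t))`. -/
noncomputable def youngConj (Φ : ℝ → ℝ) (s : ℝ) : ℝ :=
  sSup ((fun t => s * t - Φ t) '' Set.Ici 0)

/-- Generalized inverse of an increasing function: `F⁻¹(s) = inf {t ≥ 0 : F(t) ≥ s}`. -/
noncomputable def genInv (F : ℝ → ℝ) (s : ℝ) : ℝ :=
  sInf {t : ℝ | 0 ≤ t ∧ s ≤ F t}

/-!
For `t ≥ E` write `Φ⁰(t) = t · w(t)` with the logarithmic weight `w` increasing. If `τ ≤ w(u)` for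
some `u ≥ E`, then `τ v ≤ Φ⁰(v)` for all `v ≥ u`, so `Φ̃⁰(τ) ≤ τ u`. Taking `u = √s`, the weight
only shrinks by a constant factor, `w(√s) ≥ c · w(s)`, while `w(s) ≤ √s` for large `s`; hence
`Φ̃⁰(τ) < s` whenever `τ < c · w(s)`, i.e. `(Φ̃⁰)⁻¹(s) ≥ c · w(s)`. Bounded values of `s` are
handled by `(Φ̃⁰)⁻¹(s) ≥ w(E)`, which follows from the same estimate with `u = E`.
-/

open Real Finset Filter

section IteratedLog

lemma expIter_le_expIter {i k : ℕ} (hik : i ≤ k) (c : ℝ) : exp^[i] c ≤ exp^[k] c :=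
  Function.monotone_iterate_of_id_le (fun x => show x ≤ exp x by linarith [add_one_le_exp x]) hik c

lemma le_logIter_of_expIter_le {i : ℕ} {c x : ℝ} (h : exp^[i] c ≤ x) : c ≤ log^[i] x := by
  induction i generalizing c with
  | zero => exact h
  | succ i ih =>
    rw [Function.iterate_succ_apply] at h
    have hexp := ih h
    rw [Function.iterate_succ_apply']
    exact (le_log_iff_exp_le ((exp_pos c).trans_le hexp)).2 hexp

lemma le_logIter_of_le_expIter {i k : ℕ} {c x : ℝ} (hik : i ≤ k) (hx : exp^[k] c ≤ x) :
    c ≤ log^[i] x :=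
  le_logIter_of_expIter_le ((expIter_le_expIter hik c).trans hx)

lemma one_le_expIter {c : ℝ} (hc : 1 ≤ c) (k : ℕ) : 1 ≤ exp^[k] c :=
  hc.trans (expIter_le_expIter k.zero_le c)

lemma eventually_forall_le_logIter (c : ℝ) (k : ℕ) :
    ∀ᶠ s in atTop, ∀ j ≤ k, c ≤ log^[j] s :=
  (eventually_ge_atTop (exp^[k] c)).mono fun _ hs _ hj => le_logIter_of_le_expIter hj hs

lemma logIter_le_logIter {i : ℕ} {x y : ℝ} (hx : ∀ j < i, 0 < log^[j] x) (hxy : x ≤ y) :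
    log^[i] x ≤ log^[i] y := by
  induction i with
  | zero => exact hxy
  | succ i ih =>
    simp only [Function.iterate_succ_apply']
    exact log_le_log (hx i i.lt_succ_self) (ih fun j hj => hx j (hj.trans i.lt_succ_self))

lemma logIter_le_log {i : ℕ} {x : ℝ} (hi : 1 ≤ i) (hx : ∀ j < i, 0 ≤ log^[j] x) :
    log^[i] x ≤ log x := by
  induction i, hi using Nat.le_induction with
  | base => rfl
  | succ n hn ih =>
    rw [Function.iterate_succ_apply']
    exact (log_le_self (hx n n.lt_succ_self)).trans (ih fun j hj => hx j (hj.trans n.lt_succ_self))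

lemma half_logIter_le_logIter_sqrt {i : ℕ} {s : ℝ} (hi : 1 ≤ i) (hs : ∀ j ≤ i, 2 ≤ log^[j] s) :
    log^[i] s / 2 ≤ log^[i] √s := by
  induction i, hi using Nat.le_induction with
  | base =>
    have hs0 : (0 : ℝ) ≤ s := zero_le_two.trans (hs 0 (Nat.zero_le 1))
    simp [log_sqrt hs0]
  | succ n hn ih =>
    have hn2 : 2 ≤ log^[n] s := hs n n.le_succ
    have hsucc2 := hs (n + 1) le_rfl
    rw [Function.iterate_succ_apply'] at hsucc2 ⊢
    rw [Function.iterate_succ_apply']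
    -- `L / 2 ≤ L - log 2` because `L ≥ 2 > 2 log 2`
    calc log (log^[n] s) / 2 ≤ log (log^[n] s) - log 2 := by linarith [log_two_lt_d9]
      _ = log (log^[n] s / 2) := (log_div (by linarith) two_ne_zero).symm
      _ ≤ log (log^[n] √s) := log_le_log (by linarith) (ih fun j hj => hs j (hj.trans n.le_succ))

lemma eventually_log_rpow_le_sqrt (M : ℝ) : ∀ᶠ s in atTop, log s ^ M ≤ √s := by
  filter_upwards [(isLittleO_log_rpow_rpow_atTop M (by norm_num : (0 : ℝ) < 1 / 2)).bound one_pos,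
    eventually_ge_atTop 1] with s hs hs1
  rw [norm_of_nonneg (rpow_nonneg (log_nonneg hs1) _),
    norm_of_nonneg (rpow_nonneg (by linarith) _), one_mul] at hs
  rwa [sqrt_eq_rpow]

end IteratedLog

section LogWeight

lemma prod_sq_mul_rpow_le_prod_sq_mul_rpow {k : ℕ} {N : ℝ} {f g : ℕ → ℝ} (hk : 1 ≤ k)
    (hN : 0 ≤ N) (hf : ∀ i ∈ Icc 1 k, 0 ≤ f i) (hfg : ∀ i ∈ Icc 1 k, f i ≤ g i) :
    (∏ i ∈ Ico 1 k, f i ^ 2) * f k ^ (2 * N) ≤ (∏ i ∈ Ico 1 k, g i ^ 2) * g k ^ (2 * N) := by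
  have hkk : k ∈ Icc 1 k := right_mem_Icc.2 hk
  refine mul_le_mul (prod_le_prod (fun i _ => sq_nonneg _) fun i hi => ?_)
    (rpow_le_rpow (hf k hkk) (hfg k hkk) (by linarith)) (rpow_nonneg (hf k hkk) _)
    (prod_nonneg fun i _ => sq_nonneg _)
  exact pow_le_pow_left₀ (hf i (Ico_subset_Icc_self hi)) (hfg i (Ico_subset_Icc_self hi)) 2

/-- The factor `w` in `Φ⁰_{k,N}(t) = t · w(t)` for `t ≥ E`. -/
noncomputable def logWeight (k : ℕ) (N s : ℝ) : ℝ :=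
  (∏ i ∈ Ico 1 k, (log^[i] s) ^ 2) * (log^[k] s) ^ (2 * N)

variable {k : ℕ} {N : ℝ}

lemma one_le_logIter (hN : 1 ≤ 2 * N) {x : ℝ} (hx : exp^[k] (2 * N) ≤ x) {i : ℕ} (hi : i ≤ k) :
    1 ≤ log^[i] x :=
  hN.trans (le_logIter_of_le_expIter hi hx)

lemma logIter_le_logWeight (hN : 1 ≤ 2 * N) {x : ℝ} (hx : exp^[k] (2 * N) ≤ x) :
    log^[k] x ≤ logWeight k N x := by
  have hxk := one_le_logIter hN hx le_rfl
  calc log^[k] x ≤ (log^[k] x) ^ (2 * N) := self_le_rpow_of_one_le hxk hN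
    _ ≤ logWeight k N x :=
      le_mul_of_one_le_left (rpow_nonneg (by linarith) _)
        (one_le_prod fun i hi => one_le_pow₀ (one_le_logIter hN hx (mem_Ico.1 hi).2.le))

lemma one_le_logWeight (hN : 1 ≤ 2 * N) {x : ℝ} (hx : exp^[k] (2 * N) ≤ x) :
    1 ≤ logWeight k N x :=
  (one_le_logIter hN hx le_rfl).trans (logIter_le_logWeight hN hx)

lemma logWeight_le_logWeight (hk : 1 ≤ k) (hN : 1 ≤ 2 * N) {x y : ℝ}
    (hx : exp^[k] (2 * N) ≤ x) (hxy : x ≤ y) : logWeight k N x ≤ logWeight k N y :=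
  prod_sq_mul_rpow_le_prod_sq_mul_rpow hk (by linarith)
    (fun i hi => zero_le_one.trans (one_le_logIter hN hx (mem_Icc.1 hi).2))
    fun i hi => logIter_le_logIter
      (fun j hj => zero_lt_one.trans_le (one_le_logIter hN hx (hj.le.trans (mem_Icc.1 hi).2))) hxy

lemma exists_le_logWeight (hN : 1 ≤ 2 * N) (τ : ℝ) :
    ∃ u, exp^[k] (2 * N) ≤ u ∧ τ ≤ logWeight k N u := by
  have hE : exp^[k] (2 * N) ≤ exp^[k] (max τ (2 * N)) :=
    exp_monotone.iterate k (le_max_right _ _)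
  refine ⟨_, hE, ?_⟩
  calc τ ≤ max τ (2 * N) := le_max_left _ _
    _ = log^[k] (exp^[k] (max τ (2 * N))) := ((Function.LeftInverse.iterate log_exp k) _).symm
    _ ≤ _ := logIter_le_logWeight hN hE

lemma mul_logWeight_le_logWeight_sqrt (hk : 1 ≤ k) (hN : 0 ≤ N) {s : ℝ}
    (hs : ∀ j ≤ k, 2 ≤ log^[j] s) :
    (4⁻¹ : ℝ) ^ (k - 1) * (2⁻¹ : ℝ) ^ (2 * N) * logWeight k N s ≤ logWeight k N √s := by
  have hhalf := prod_sq_mul_rpow_le_prod_sq_mul_rpow (N := N) hk hN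
    (f := fun i => log^[i] s / 2) (g := fun i => log^[i] √s)
    (fun i hi => by linarith [hs i (mem_Icc.1 hi).2])
    fun i hi => half_logIter_le_logIter_sqrt (mem_Icc.1 hi).1
      fun j hj => hs j (hj.trans (mem_Icc.1 hi).2)
  have hprod : ∏ i ∈ Ico 1 k, (log^[i] s / 2) ^ 2 =
      (4⁻¹ : ℝ) ^ (k - 1) * ∏ i ∈ Ico 1 k, (log^[i] s) ^ 2 := by
    rw [← Nat.card_Ico 1 k, ← prod_const, ← prod_mul_distrib]
    exact prod_congr rfl fun i _ => by ring
  have hlast : (log^[k] s / 2) ^ (2 * N) = (2⁻¹ : ℝ) ^ (2 * N) * (log^[k] s) ^ (2 * N) := by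
    rw [div_eq_inv_mul, mul_rpow (by norm_num) (by linarith [hs k le_rfl])]
  rw [hprod, hlast] at hhalf
  unfold logWeight
  calc _ = _ := by ring
    _ ≤ _ := hhalf

lemma logWeight_le_log_rpow (hk : 1 ≤ k) (hN : 0 ≤ N) {s : ℝ} (hs : ∀ j ≤ k, 1 ≤ log^[j] s) :
    logWeight k N s ≤ log s ^ (2 * k + 2 * N) := by
  have hlog : ∀ i ∈ Icc 1 k, log^[i] s ≤ log s := fun i hi =>
    logIter_le_log (mem_Icc.1 hi).1 fun j hj =>
      zero_le_one.trans (hs j (hj.le.trans (mem_Icc.1 hi).2))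
  have hs1 : 1 ≤ log s := hs 1 hk
  have hprod : ∏ i ∈ Ico 1 k, (log^[i] s) ^ 2 ≤ log s ^ (2 * k) :=
    calc ∏ i ∈ Ico 1 k, (log^[i] s) ^ 2 ≤ ∏ _i ∈ Ico 1 k, log s ^ 2 :=
          prod_le_prod (fun i _ => sq_nonneg _) fun i hi =>
            pow_le_pow_left₀ (zero_le_one.trans (hs i (mem_Ico.1 hi).2.le))
              (hlog i (Ico_subset_Icc_self hi)) 2
      _ = log s ^ (2 * (k - 1)) := by rw [prod_const, Nat.card_Ico, pow_mul]
      _ ≤ log s ^ (2 * k) := pow_le_pow_right₀ hs1 (by omega)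
  have hlast : (log^[k] s) ^ (2 * N) ≤ log s ^ (2 * N) :=
    rpow_le_rpow (zero_le_one.trans (hs k le_rfl)) (hlog k (right_mem_Icc.2 hk)) (by linarith)
  calc logWeight k N s ≤ log s ^ (2 * k) * log s ^ (2 * N) :=
        mul_le_mul hprod hlast (rpow_nonneg (zero_le_one.trans (hs k le_rfl)) _) (by positivity)
    _ = log s ^ (2 * k + 2 * N) := by
      rw [rpow_add (by linarith), ← rpow_natCast, Nat.cast_mul, Nat.cast_two]

end LogWeight

section YoungConj

variable {Φ : ℝ → ℝ} {τ u : ℝ}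

lemma mul_mem_upperBounds_youngConj (hΦ : ∀ v, 0 ≤ v → 0 ≤ Φ v) (hτ : 0 ≤ τ) (hu : 0 ≤ u)
    (h : ∀ v, u ≤ v → τ * v ≤ Φ v) : τ * u ∈ upperBounds ((fun t => τ * t - Φ t) '' Set.Ici 0) := by
  rintro _ ⟨v, hv, rfl⟩
  rcases le_total v u with hvu | huv
  · linarith [mul_le_mul_of_nonneg_left hvu hτ, hΦ v hv]
  · linarith [h v huv, mul_nonneg hτ hu]

lemma youngConj_le_mul (hΦ : ∀ v, 0 ≤ v → 0 ≤ Φ v) (hτ : 0 ≤ τ) (hu : 0 ≤ u)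
    (h : ∀ v, u ≤ v → τ * v ≤ Φ v) : youngConj Φ τ ≤ τ * u :=
  Real.sSup_le (mul_mem_upperBounds_youngConj hΦ hτ hu h) (mul_nonneg hτ hu)

lemma sub_le_youngConj (hbdd : BddAbove ((fun t => τ * t - Φ t) '' Set.Ici 0)) {v : ℝ}
    (hv : 0 ≤ v) : τ * v - Φ v ≤ youngConj Φ τ :=
  le_csSup hbdd ⟨v, hv, rfl⟩

lemma le_genInv {F : ℝ → ℝ} {s c : ℝ} (hne : ∃ t, 0 ≤ t ∧ s ≤ F t)
    (h : ∀ t, 0 ≤ t → s ≤ F t → c ≤ t) : c ≤ genInv F s :=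
  le_csInf hne fun t ht => h t ht.1 ht.2

end YoungConj

section Phi0

variable {k : ℕ} {N : ℝ}

lemma Phi0_eq_mul_logWeight (k : ℕ) (N t : ℝ) :
    Phi0 k N t = t * logWeight k N (max (exp^[k] (2 * N)) t) := by
  unfold Phi0 logWeight
  split_ifs with h
  · rw [max_eq_right h, mul_assoc]
  · rw [max_eq_left (not_le.1 h).le, mul_assoc]

lemma Phi0_nonneg (hN : 1 ≤ 2 * N) {t : ℝ} (ht : 0 ≤ t) : 0 ≤ Phi0 k N t := by
  rw [Phi0_eq_mul_logWeight]
  exact mul_nonneg ht (zero_le_one.trans (one_le_logWeight hN (le_max_left _ _)))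

lemma mul_le_Phi0 (hk : 1 ≤ k) (hN : 1 ≤ 2 * N) {τ u v : ℝ} (hu : exp^[k] (2 * N) ≤ u)
    (hτu : τ ≤ logWeight k N u) (huv : u ≤ v) : τ * v ≤ Phi0 k N v := by
  rw [Phi0_eq_mul_logWeight, max_eq_right (hu.trans huv), mul_comm τ]
  exact mul_le_mul_of_nonneg_left (hτu.trans (logWeight_le_logWeight hk hN hu huv))
    (zero_le_one.trans ((one_le_expIter hN k).trans (hu.trans huv)))

lemma youngConj_Phi0_le (hk : 1 ≤ k) (hN : 1 ≤ 2 * N) {τ u : ℝ} (hτ : 0 ≤ τ)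
    (hu : exp^[k] (2 * N) ≤ u) (hτu : τ ≤ logWeight k N u) :
    youngConj (Phi0 k N) τ ≤ τ * u :=
  youngConj_le_mul (fun _ hv => Phi0_nonneg hN hv) hτ
    (zero_le_one.trans ((one_le_expIter hN k).trans hu)) fun _ => mul_le_Phi0 hk hN hu hτu

lemma bddAbove_youngConj_Phi0 (hk : 1 ≤ k) (hN : 1 ≤ 2 * N) {τ : ℝ} (hτ : 0 ≤ τ) :
    BddAbove ((fun t => τ * t - Phi0 k N t) '' Set.Ici 0) := by
  obtain ⟨u, hu, hτu⟩ := exists_le_logWeight (k := k) hN τ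
  exact ⟨_, mul_mem_upperBounds_youngConj (fun _ hv => Phi0_nonneg hN hv) hτ
    (zero_le_one.trans ((one_le_expIter hN k).trans hu)) fun _ => mul_le_Phi0 hk hN hu hτu⟩

lemma exists_le_youngConj_Phi0 (hk : 1 ≤ k) (hN : 1 ≤ 2 * N) (s : ℝ) :
    ∃ t, 0 ≤ t ∧ s ≤ youngConj (Phi0 k N) t := by
  set E := exp^[k] (2 * N)
  have hE : 0 < E := zero_lt_one.trans_le (one_le_expIter hN k)
  -- the single term `t E - Φ⁰(E)` of the supremum is already at least `s`
  set t := (max s 0 + Phi0 k N E) / E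
  have ht : 0 ≤ t := div_nonneg (add_nonneg (le_max_right _ _) (Phi0_nonneg hN hE.le)) hE.le
  refine ⟨t, ht, ?_⟩
  calc s ≤ max s 0 := le_max_left _ _
    _ = t * E - Phi0 k N E := by rw [div_mul_cancel₀ _ hE.ne']; ring
    _ ≤ youngConj (Phi0 k N) t := sub_le_youngConj (bddAbove_youngConj_Phi0 hk hN ht) hE.le

lemma logWeight_le_of_le_youngConj_Phi0 (hk : 1 ≤ k) (hN : 1 ≤ 2 * N) {s t : ℝ}
    (hs : Phi0 k N (exp^[k] (2 * N)) ≤ s) (ht : 0 ≤ t) (hts : s ≤ youngConj (Phi0 k N) t) :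
    logWeight k N (exp^[k] (2 * N)) ≤ t := by
  set E := exp^[k] (2 * N)
  by_contra! htE
  have hE : 0 < E := zero_lt_one.trans_le (one_le_expIter hN k)
  have hΦE : Phi0 k N E = E * logWeight k N E := by rw [Phi0_eq_mul_logWeight, max_self]
  have hlt : s < s :=
    calc s ≤ youngConj (Phi0 k N) t := hts
      _ ≤ t * E := youngConj_Phi0_le hk hN ht le_rfl htE.le
      _ < logWeight k N E * E := mul_lt_mul_of_pos_right htE hE
      _ = Phi0 k N E := by rw [hΦE, mul_comm]
      _ ≤ s := hs
  exact hlt.false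

lemma exists_eventually_mul_logWeight_le_of_le_youngConj_Phi0 (hk : 1 ≤ k) (hN : 1 ≤ 2 * N) :
    ∃ c, 0 < c ∧ ∀ᶠ s in atTop, ∀ t, 0 ≤ t → s ≤ youngConj (Phi0 k N) t →
      c * logWeight k N s ≤ t := by
  set E := exp^[k] (2 * N)
  have hE : 0 < E := zero_lt_one.trans_le (one_le_expIter hN k)
  have hN0 : 0 ≤ N := by linarith
  set c : ℝ := (4⁻¹ : ℝ) ^ (k - 1) * (2⁻¹ : ℝ) ^ (2 * N)
  have hc : c ≤ 1 := mul_le_one₀ (pow_le_one₀ (by norm_num) (by norm_num))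
    (by positivity) (rpow_le_one (by norm_num) (by norm_num) (by linarith))
  refine ⟨c, by positivity, ?_⟩
  filter_upwards [eventually_ge_atTop E, tendsto_sqrt_atTop.eventually (eventually_ge_atTop E),
    eventually_forall_le_logIter 2 k, eventually_log_rpow_le_sqrt (2 * k + 2 * N)]
    with s hsE hsqrt hs2 hlog t ht hts
  have hw0 : 0 ≤ logWeight k N s := zero_le_one.trans (one_le_logWeight hN hsE)
  have hw : logWeight k N s ≤ √s :=
    (logWeight_le_log_rpow hk hN0 fun j hj => one_le_two.trans (hs2 j hj)).trans hlog
  have hsqrt0 : 0 < √s := hE.trans_le hsqrt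
  by_contra! htc
  have hlt : s < s :=
    calc s ≤ youngConj (Phi0 k N) t := hts
      _ ≤ t * √s := youngConj_Phi0_le hk hN ht hsqrt
          (htc.le.trans (mul_logWeight_le_logWeight_sqrt hk hN0 hs2))
      _ < c * logWeight k N s * √s := mul_lt_mul_of_pos_right htc hsqrt0
      _ ≤ √s * √s := mul_le_mul_of_nonneg_right ((mul_le_of_le_one_left hw0 hc).trans hw) hsqrt0.le
      _ = s := mul_self_sqrt (hE.le.trans hsE)
  exact hlt.false

end Phi0

/-- There is `C_{k,N} > 0` so that for all `s ≥ Φ⁰_{k,N}(E)` the generalized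
inverse of the Young conjugate `Φ̃⁰` of `Φ⁰_{k,N}` satisfies
`(Φ̃⁰)⁻¹(s) ≥ C_{k,N}·(ln s)²·(ln^[2] s)²⋯(ln^[k-1] s)²·(ln^[k] s)^(2N)`. -/
theorem genInv_youngConj_Phi0_lower_bound
    (k : ℕ) (hk : 1 ≤ k) (N : ℝ) (hN : 1 < N) :
    ∃ C : ℝ, 0 < C ∧ ∀ s, Phi0 k N (Real.exp^[k] (2 * N)) ≤ s →
      C * ((∏ i ∈ Finset.Ico 1 k, (Real.log^[i] s) ^ 2) *
          (Real.log^[k] s) ^ (2 * N)) ≤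
        genInv (youngConj (Phi0 k N)) s := by
  have hN' : 1 ≤ 2 * N := by linarith
  set E := exp^[k] (2 * N)
  obtain ⟨c, hc, hlarge⟩ := exists_eventually_mul_logWeight_le_of_le_youngConj_Phi0 hk hN'
  obtain ⟨T, hT⟩ := eventually_atTop.1 hlarge
  have hwE := one_le_logWeight (k := k) hN' le_rfl
  have hwT := one_le_logWeight (k := k) hN' (le_max_left E T)
  refine ⟨min c (logWeight k N E / logWeight k N (max E T)), lt_min hc (by positivity),
    fun s hs => ?_⟩
  have hsE : E ≤ s := by
    rw [Phi0_eq_mul_logWeight, max_self] at hs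
    exact (le_mul_of_one_le_right (zero_le_one.trans (one_le_expIter hN' k)) hwE).trans hs
  have hws : 0 ≤ logWeight k N s := zero_le_one.trans (one_le_logWeight hN' hsE)
  refine le_genInv (exists_le_youngConj_Phi0 hk hN' s) fun t ht hts => ?_
  rcases le_total T s with hTs | hsT
  · exact (mul_le_mul_of_nonneg_right (min_le_left _ _) hws).trans (hT s hTs t ht hts)
  · calc _ ≤ logWeight k N E / logWeight k N (max E T) * logWeight k N (max E T) :=
          mul_le_mul (min_le_right _ _)
            (logWeight_le_logWeight hk hN' hsE (hsT.trans (le_max_right E T))) hws (by positivity)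
      _ = logWeight k N E := div_mul_cancel₀ _ (by positivity)
      _ ≤ t := logWeight_le_of_le_youngConj_Phi0 hk hN' hs ht hts
end

section
/- Let k ≥ 1 be an integer, N > 1 a real number, and let j be a real number with j ≥ exp^{(k)}(2N). Then (ln^{(k−1)}(j+1))^{−(N−1)/2} − (ln^{(k−1)}(j+2))^{−(N−1)/2} ≥ ((N−1)/2)·[(j+2)·ln(j+2)·(ln^{(2)}(j+2))⋯(ln^{(k−2)}(j+2))·(ln^{(k−1)}(j+2))^{(N+1)/2}]^{-1}. -/
/-!
By the mean value theorem the left-hand side equals `-F'(c)` for some `c ∈ (j + 1, j + 2)`, where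
`F y = (log^[k-1] y) ^ (-(N - 1) / 2)` and
`-F'(y) = ((N - 1) / 2) * ((∏ i < k - 1, log^[i] y) * (log^[k-1] y) ^ ((N + 1) / 2))⁻¹`.
Every iterated logarithm in this expression is positive and increasing once `y > exp^[k-1] 0`,
so `-F'` is decreasing there and `-F'(c) ≥ -F'(j + 2)`.
-/

open Real Finset Set

lemma monotone_exp_iterate_zero : Monotone fun n => exp^[n] 0 :=
  exp_monotone.monotone_iterate_of_le_map (exp_pos 0).le

lemma lt_log_iterate_of_exp_iterate_lt {n : ℕ} {x y : ℝ} (h : exp^[n] y < x) :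
    y < log^[n] x := by
  induction n generalizing y with
  | zero => exact h
  | succ n ih =>
    rw [Function.iterate_succ_apply] at h
    have hlog : exp y < log^[n] x := ih h
    rw [Function.iterate_succ_apply', lt_log_iff_exp_lt ((exp_pos y).trans hlog)]
    exact hlog

lemma log_iterate_pos {i n : ℕ} {x : ℝ} (hi : i ≤ n) (hx : exp^[n] 0 < x) :
    0 < log^[i] x :=
  lt_log_iterate_of_exp_iterate_lt ((monotone_exp_iterate_zero hi).trans_lt hx)

lemma log_iterate_le_log_iterate {n : ℕ} {x y : ℝ} (hx : exp^[n] 0 < x) (hxy : x ≤ y) :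
    log^[n] x ≤ log^[n] y := by
  induction n generalizing x y with
  | zero => exact hxy
  | succ n ih =>
    rw [Function.iterate_succ_apply'] at hx
    have hx₀ : 0 < x := (exp_pos _).trans hx
    simp only [Function.iterate_succ_apply]
    exact ih ((lt_log_iff_exp_lt hx₀).2 hx) (log_le_log hx₀ hxy)

lemma hasDerivAt_log_iterate {n : ℕ} {x : ℝ} (h : ∀ i < n, log^[i] x ≠ 0) :
    HasDerivAt (log^[n]) (∏ i ∈ range n, log^[i] x)⁻¹ x := by
  induction n with
  | zero => simpa using hasDerivAt_id x
  | succ n ih =>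
    have hcomp := (hasDerivAt_log (h n n.lt_succ_self)).comp x
      (ih fun i hi => h i (hi.trans n.lt_succ_self))
    rw [Function.iterate_succ', prod_range_succ, mul_inv, mul_comm]
    exact hcomp

lemma hasDerivAt_log_iterate_rpow_neg {n : ℕ} {x : ℝ} (a : ℝ) (hx : exp^[n] 0 < x) :
    HasDerivAt (fun y => (log^[n] y) ^ (-a))
      (-(a * ((∏ i ∈ range n, log^[i] x) * (log^[n] x) ^ (a + 1))⁻¹)) x := by
  have hL := log_iterate_pos le_rfl hx
  have hderiv := (hasDerivAt_log_iterate fun i hi => (log_iterate_pos hi.le hx).ne').rpow_const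
    (p := -a) (Or.inl hL.ne')
  convert hderiv using 1
  rw [show -a - 1 = -(a + 1) by ring, rpow_neg hL.le, mul_inv]
  ring

lemma inv_prod_log_iterate_mul_rpow_anti {n : ℕ} {x y p : ℝ} (hp : 0 ≤ p)
    (hx : exp^[n] 0 < x) (hxy : x ≤ y) :
    ((∏ i ∈ range n, log^[i] y) * (log^[n] y) ^ p)⁻¹ ≤
      ((∏ i ∈ range n, log^[i] x) * (log^[n] x) ^ p)⁻¹ := by
  have hexp {i : ℕ} (hi : i ≤ n) : exp^[i] 0 < x := (monotone_exp_iterate_zero hi).trans_lt hx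
  have hpos {i : ℕ} (hi : i ≤ n) : 0 < log^[i] x := log_iterate_pos hi hx
  have hmono {i : ℕ} (hi : i ≤ n) : log^[i] x ≤ log^[i] y := log_iterate_le_log_iterate (hexp hi) hxy
  refine inv_anti₀ (mul_pos (prod_pos fun i hi => hpos (mem_range.1 hi).le)
    (rpow_pos_of_pos (hpos le_rfl) p)) (mul_le_mul ?_ ?_ ?_ ?_)
  · exact prod_le_prod (fun i hi => (hpos (mem_range.1 hi).le).le)
      fun i hi => hmono (mem_range.1 hi).le
  · exact rpow_le_rpow (hpos le_rfl).le (hmono le_rfl) hp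
  · exact (rpow_pos_of_pos (hpos le_rfl) p).le
  · exact prod_nonneg fun i hi => ((hpos (mem_range.1 hi).le).trans_le (hmono (mem_range.1 hi).le)).le

lemma log_iterate_rpow_neg_sub_succ_ge {n : ℕ} {a x : ℝ} (ha : 0 ≤ a) (hx : exp^[n] 0 < x) :
    a * ((∏ i ∈ range n, log^[i] (x + 1)) * (log^[n] (x + 1)) ^ (a + 1))⁻¹ ≤
      (log^[n] x) ^ (-a) - (log^[n] (x + 1)) ^ (-a) := by
  set g : ℝ → ℝ := fun y => a * ((∏ i ∈ range n, log^[i] y) * (log^[n] y) ^ (a + 1))⁻¹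
  have hderiv : ∀ y ∈ Icc x (x + 1), HasDerivAt (fun y => (log^[n] y) ^ (-a)) (-g y) y :=
    fun y hy => hasDerivAt_log_iterate_rpow_neg a (hx.trans_le hy.1)
  have hderiv_le : ∀ y ∈ interior (Icc x (x + 1)),
      deriv (fun y => (log^[n] y) ^ (-a)) y ≤ -g (x + 1) := by
    intro y hy
    rw [interior_Icc] at hy
    rw [(hderiv y (Ioo_subset_Icc_self hy)).deriv, neg_le_neg_iff]
    exact mul_le_mul_of_nonneg_left
      (inv_prod_log_iterate_mul_rpow_anti (by linarith) (hx.trans hy.1) hy.2.le) ha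
  have hslope := (convex_Icc x (x + 1)).image_sub_le_mul_sub_of_deriv_le
    (fun y hy => (hderiv y hy).continuousAt.continuousWithinAt)
    (fun y hy => (hderiv y (interior_subset hy)).differentiableAt.differentiableWithinAt)
    hderiv_le x (left_mem_Icc.2 (by linarith)) (x + 1) (right_mem_Icc.2 (by linarith))
    (by linarith)
  linarith

theorem iterated_log_difference_lower_bound_general
    (k : ℕ) (N : ℝ) (hN : 1 < N)
    (j : ℝ) (hj : Real.exp^[k] (2 * N) ≤ j) :
    (Real.log^[k - 1] (j + 1)) ^ (-(N - 1) / 2) -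
        (Real.log^[k - 1] (j + 2)) ^ (-(N - 1) / 2) ≥
      ((N - 1) / 2) *
        ((∏ i ∈ Finset.range (k - 1), Real.log^[i] (j + 2)) *
          (Real.log^[k - 1] (j + 2)) ^ ((N + 1) / 2))⁻¹ := by
  have hstart : exp^[k - 1] 0 < j + 1 :=
    calc exp^[k - 1] 0 ≤ exp^[k] 0 := monotone_exp_iterate_zero (k.sub_le 1)
      _ ≤ exp^[k] (2 * N) := exp_monotone.iterate k (by linarith)
      _ < j + 1 := by linarith
  have key := log_iterate_rpow_neg_sub_succ_ge (a := (N - 1) / 2) (by linarith) hstart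
  rw [show j + 1 + 1 = j + 2 by ring, show (N - 1) / 2 + 1 = (N + 1) / 2 by ring,
    show -((N - 1) / 2) = -(N - 1) / 2 by ring] at key
  exact key

/-- For an integer `k ≥ 1`, a real `N > 1` and a real `j ≥ exp^[k](2N)`:
`(ln^[k-1](j+1))^(−(N−1)/2) − (ln^[k-1](j+2))^(−(N−1)/2)
   ≥ ((N−1)/2)·[(j+2)·ln(j+2)⋯(ln^[k-2](j+2))·(ln^[k-1](j+2))^((N+1)/2)]⁻¹`. -/
theorem iterated_log_difference_lower_bound
    (k : ℕ) (hk : 1 ≤ k) (N : ℝ) (hN : 1 < N)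
    (j : ℝ) (hj : Real.exp^[k] (2 * N) ≤ j) :
    (Real.log^[k - 1] (j + 1)) ^ (-(N - 1) / 2) -
        (Real.log^[k - 1] (j + 2)) ^ (-(N - 1) / 2) ≥
      ((N - 1) / 2) *
        ((∏ i ∈ Finset.range (k - 1), Real.log^[i] (j + 2)) *
          (Real.log^[k - 1] (j + 2)) ^ ((N + 1) / 2))⁻¹ :=
  iterated_log_difference_lower_bound_general k N hN j hj
end

section
/- Let n ≥ 1, let w : ℝⁿ → [0,∞) be locally integrable with dμ = w dx, and let B̃ : ℝⁿ → (n×n real matrices) be Lipschitz; for Lipschitz v set ∇_A v(y) = B̃(y)·∇v(y) (defined a.e. by Rademacher's theorem). Fix x ∈ ℝⁿ, r > 0 and C_P > 0, and assume the proportional vanishing Poincaré inequality: for every Lipschitz function u on B(x, 3r/2) vanishing on a measurable subset E ⊆ B(x,r) with μ(E) ≥ μ(B(x,r))/2, one has ∫_{B(x,r)} u² dμ ≤ C_P·r²·∫_{B(x,3r/2)} |∇_A u|² dy. Let v be Lipschitz on B(x,2r), let v̄(y) = max{0, min{1, v(y)}}, and set 𝒜 = {y ∈ B(x,r) : v̄(y)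 = 0}, 𝒞 = {y ∈ B(x,r) : v̄(y) = 1}, 𝒟 = {y ∈ B(x,2r) : 0 < v̄(y) < 1}. If ∫_{B(x,3r/2)} |∇_A v̄(y)|² dy ≤ (C₀/r²)·μ(𝒟) for some C₀ > 0, and μ(𝒜) ≥ μ(B(x,r))/2, then C₀·μ(𝒟) ≥ C₁·μ(𝒞)²/μ(B(x,r)), where C₁ > 0 depends only on C_P. -/
/-!
Apply the vanishing Poincaré inequality to `u = v̄` with vanishing set `E = 𝒜`. Since `v̄ = 1`
on `𝒞`, this gives `μ(𝒞) ≤ ∫_{B(x,r)} v̄² dμ ≤ C_P r² ∫ |∇_A v̄|² ≤ C_P C₀ μ(𝒟)`, and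
`μ(𝒞)² / μ(B(x,r)) ≤ μ(𝒞)` because `𝒞 ⊆ B(x,r)`. Hence `C₁ = 1 / C_P` works.
-/

open MeasureTheory Metric ENNReal

/-- The a.e.-defined gradient (via Rademacher, `fderiv` is the junk value `0` where `f` fails
to be differentiable) of `f : ℝⁿ → ℝ`, as a vector in `Fin n → ℝ`. -/
noncomputable def egrad {n : ℕ} (f : EuclideanSpace ℝ (Fin n) → ℝ)
    (y : EuclideanSpace ℝ (Fin n)) : Fin n → ℝ :=
  fun i => fderiv ℝ f y (EuclideanSpace.single i 1)

/-- The `A`-gradient `∇_A f(y) = B̃(y)·∇f(y)`. -/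
noncomputable def gradA {n : ℕ} (Bt : EuclideanSpace ℝ (Fin n) → Matrix (Fin n) (Fin n) ℝ)
    (f : EuclideanSpace ℝ (Fin n) → ℝ) (y : EuclideanSpace ℝ (Fin n)) : Fin n → ℝ :=
  (Bt y).mulVec (egrad f y)

/-- Squared Euclidean norm of a vector. -/
noncomputable def sqnorm {n : ℕ} (v : Fin n → ℝ) : ℝ := ∑ i, v i ^ 2

/-- The weighted measure `dμ = w dx`. -/
noncomputable def wMeasure {n : ℕ} (w : EuclideanSpace ℝ (Fin n) → ℝ) :
    Measure (EuclideanSpace ℝ (Fin n)) :=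
  volume.withDensity fun y => ENNReal.ofReal (w y)

/-- The truncation `v̄ = max{0, min{1, v}}`. -/
noncomputable def clamp01 {n : ℕ} (v : EuclideanSpace ℝ (Fin n) → ℝ)
    (y : EuclideanSpace ℝ (Fin n)) : ℝ := max 0 (min 1 (v y))

theorem ContinuousOn.measurableSet_inter_preimage_of_isClosed {α β : Type*}
    [TopologicalSpace α] [MeasurableSpace α] [OpensMeasurableSpace α] [TopologicalSpace β]
    {f : α → β} {U : Set α} {t : Set β} (hf : ContinuousOn f U) (hU : IsOpen U)
    (ht : IsClosed t) : MeasurableSet (U ∩ f ⁻¹' t) := by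
  have hcompl : U ∩ f ⁻¹' t = U \ (U ∩ f ⁻¹' tᶜ) := by
    ext y; by_cases hy : f y ∈ t <;> simp [hy]
  rw [hcompl]
  exact hU.measurableSet.diff (hf.isOpen_inter_preimage hU ht.isOpen_compl).measurableSet

theorem MeasureTheory.LocallyIntegrable.isLocallyFiniteMeasure_withDensity_ofReal
    {α : Type*} [TopologicalSpace α] [MeasurableSpace α] {μ : Measure α} [SFinite μ]
    {f : α → ℝ} (hf : LocallyIntegrable f μ) :
    IsLocallyFiniteMeasure (μ.withDensity fun y => ENNReal.ofReal (f y)) := by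
  refine ⟨fun y => ?_⟩
  obtain ⟨s, hs, hfs⟩ := hf y
  exact ⟨s, hs, by rw [withDensity_apply']; exact hfs.lintegral_lt_top⟩

theorem MeasureTheory.measureReal_le_setIntegral_of_one_le {α : Type*} [MeasurableSpace α]
    {μ : Measure α} {f : α → ℝ} {s t : Set α} (hs : μ s ≠ ∞) (hf : IntegrableOn f s μ)
    (hf₀ : 0 ≤ᵐ[μ.restrict s] f) (hts : t ⊆ s) (hf₁ : ∀ y ∈ t, 1 ≤ f y) :
    μ.real t ≤ ∫ y in s, f y ∂μ := by
  have := isFiniteMeasure_restrict.2 hs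
  have hsub : t ⊆ {y | 1 ≤ f y} ∩ s := fun y hy => ⟨hf₁ y hy, hts hy⟩
  calc μ.real t ≤ (μ.restrict s).real {y | 1 ≤ f y} :=
        ENNReal.toReal_mono (measure_ne_top _ _) <|
          (measure_mono hsub).trans (Measure.le_restrict_apply _ _)
    _ ≤ ∫ y in s, f y ∂μ := by
        simpa using mul_meas_ge_le_integral_of_nonneg hf₀ hf 1

theorem inv_mul_sq_div_le {k b c d : ℝ} (hk : 0 < k) (hc : 0 ≤ c) (hcb : c ≤ b)
    (hcd : c ≤ k * d) : k⁻¹ * c ^ 2 / b ≤ d := by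
  have hsq : c ^ 2 / b ≤ c := by
    rcases hc.eq_or_lt with rfl | hc'
    · simp
    · rw [div_le_iff₀ (hc'.trans_le hcb)]; nlinarith
  calc k⁻¹ * c ^ 2 / b = k⁻¹ * (c ^ 2 / b) := mul_div_assoc _ _ _
    _ ≤ k⁻¹ * c := by gcongr
    _ ≤ d := by rw [inv_mul_le_iff₀ hk]; exact hcd

section clamp01

variable {n : ℕ} {v : EuclideanSpace ℝ (Fin n) → ℝ}

theorem clamp01_nonneg (y : EuclideanSpace ℝ (Fin n)) : 0 ≤ clamp01 v y := le_max_left _ _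

theorem clamp01_le_one (y : EuclideanSpace ℝ (Fin n)) : clamp01 v y ≤ 1 :=
  max_le zero_le_one (min_le_left _ _)

theorem LipschitzOnWith.clamp01 {L : NNReal} {s : Set (EuclideanSpace ℝ (Fin n))}
    (hv : LipschitzOnWith L v s) : LipschitzOnWith L (clamp01 v) s := by
  rw [← one_mul L]
  exact ((LipschitzWith.id.const_min 1).const_max 0).comp_lipschitzOnWith hv

theorem integrableOn_sq_clamp01 {μ : Measure (EuclideanSpace ℝ (Fin n))}
    {s : Set (EuclideanSpace ℝ (Fin n))} (hs : MeasurableSet s) (hμs : μ s ≠ ∞)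
    (hv : ContinuousOn (clamp01 v) s) : IntegrableOn (fun y => clamp01 v y ^ 2) s μ := by
  refine .of_bound hμs.lt_top ((hv.pow 2).aestronglyMeasurable hs) 1 ?_
  filter_upwards with y
  rw [Real.norm_eq_abs, abs_of_nonneg (by positivity)]
  exact pow_le_one₀ (clamp01_nonneg y) (clamp01_le_one y)

end clamp01

/-- Lemma on proportional vanishing Poincaré / isoperimetric-type estimate:
assuming the proportional vanishing Poincaré inequality with constant `C_P` on `B(x,r)`,
if `v` is Lipschitz on `B(x,2r)`, `v̄ = max{0,min{1,v}}`,
`𝒜 = {v̄ = 0} ∩ B(x,r)`, `𝒞 = {v̄ = 1} ∩ B(x,r)`, `𝒟 = {0 < v̄ < 1} ∩ B(x,2r)`,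
`∫_{B(x,3r/2)} |∇_A v̄|² dy ≤ (C₀/r²)·μ(𝒟)` and `μ(𝒜) ≥ μ(B(x,r))/2`, then
`C₀·μ(𝒟) ≥ C₁·μ(𝒞)²/μ(B(x,r))` where `C₁ > 0` depends only on `C_P`. -/
theorem vanishing_poincare_isoperimetric (CP : ℝ) (hCP : 0 < CP) :
    ∃ C1 : ℝ, 0 < C1 ∧
    ∀ (n : ℕ), 1 ≤ n →
    ∀ (w : EuclideanSpace ℝ (Fin n) → ℝ), (∀ y, 0 ≤ w y) →
      LocallyIntegrable w volume →
    ∀ (Bt : EuclideanSpace ℝ (Fin n) → Matrix (Fin n) (Fin n) ℝ),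
      (∀ i j, ∃ K : NNReal, LipschitzWith K fun y => Bt y i j) →
    ∀ (x : EuclideanSpace ℝ (Fin n)) (r : ℝ), 0 < r →
    -- proportional vanishing Poincaré inequality on B(x,r):
    (∀ u : EuclideanSpace ℝ (Fin n) → ℝ,
      (∃ L : NNReal, LipschitzOnWith L u (ball x (3 * r / 2))) →
      ∀ E : Set (EuclideanSpace ℝ (Fin n)), MeasurableSet E → E ⊆ ball x r →
        wMeasure w (ball x r) / 2 ≤ wMeasure w E →
        (∀ y ∈ E, u y = 0) →
        ∫ y in ball x r, (u y) ^ 2 ∂(wMeasure w) ≤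
          CP * r ^ 2 * ∫ y in ball x (3 * r / 2), sqnorm (gradA Bt u y)) →
    ∀ (v : EuclideanSpace ℝ (Fin n) → ℝ),
      (∃ L : NNReal, LipschitzOnWith L v (ball x (2 * r))) →
    ∀ C0 : ℝ, 0 < C0 →
    (∫ y in ball x (3 * r / 2), sqnorm (gradA Bt (clamp01 v) y) ≤
      C0 / r ^ 2 *
        (wMeasure w {y | y ∈ ball x (2 * r) ∧ 0 < clamp01 v y ∧ clamp01 v y < 1}).toReal) →
    (wMeasure w (ball x r) / 2 ≤ wMeasure w {y | y ∈ ball x r ∧ clamp01 v y = 0}) →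
    C1 * (wMeasure w {y | y ∈ ball x r ∧ clamp01 v y = 1}).toReal ^ 2 /
        (wMeasure w (ball x r)).toReal ≤
      C0 * (wMeasure w {y | y ∈ ball x (2 * r) ∧ 0 < clamp01 v y ∧ clamp01 v y < 1}).toReal := by
  refine ⟨CP⁻¹, inv_pos.2 hCP, ?_⟩
  intro n _ w _ hw Bt _ x r hr hP v ⟨L, hv⟩ C0 _ hgrad hA
  have : IsLocallyFiniteMeasure (wMeasure w) := hw.isLocallyFiniteMeasure_withDensity_ofReal
  have hfin : wMeasure w (ball x r) ≠ ∞ := measure_ball_lt_top.ne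
  have hlip : LipschitzOnWith L (clamp01 v) (ball x (3 * r / 2)) :=
    (hv.mono (ball_subset_ball (by linarith))).clamp01
  have hcont : ContinuousOn (clamp01 v) (ball x r) :=
    (hlip.mono (ball_subset_ball (by linarith))).continuousOn
  have hpoincare := hP (clamp01 v) ⟨L, hlip⟩ _
    (hcont.measurableSet_inter_preimage_of_isClosed isOpen_ball isClosed_singleton)
    (fun y hy => hy.1) hA (fun y hy => hy.2)
  refine inv_mul_sq_div_le hCP ENNReal.toReal_nonneg
    (measureReal_mono (fun y hy => hy.1) hfin) ?_
  calc (wMeasure w).real {y | y ∈ ball x r ∧ clamp01 v y = 1}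
      ≤ ∫ y in ball x r, clamp01 v y ^ 2 ∂(wMeasure w) :=
        measureReal_le_setIntegral_of_one_le hfin
          (integrableOn_sq_clamp01 measurableSet_ball hfin hcont)
          (ae_of_all _ fun y => by positivity) (fun y hy => hy.1)
          (fun y hy => by rw [hy.2]; norm_num)
    _ ≤ CP * r ^ 2 * ∫ y in ball x (3 * r / 2), sqnorm (gradA Bt (clamp01 v) y) := hpoincare
    _ ≤ CP * r ^ 2 * (C0 / r ^ 2 *
          (wMeasure w {y | y ∈ ball x (2 * r) ∧ 0 < clamp01 v y ∧ clamp01 v y < 1}).toReal) := by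
        gcongr
    _ = CP * (C0 *
          (wMeasure w {y | y ∈ ball x (2 * r) ∧ 0 < clamp01 v y ∧ clamp01 v y < 1}).toReal) := by
        field_simp
end
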